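/- arXiv:1811.02821 — 7 statements merged into one kernel-verified Lean document; each statement's English description precedes it below -/
import Mathlib

section
/- Let N ≥ 1 and let U ∈ M_N(ℂ) be defined by U_{ij} = δ_{ij} - (1/(N-1))(1 ± 1/√N) for i,j ∈ {1,…,N-1}, and U_{iN} = U_{Nj} = U_{NN} = ±1/√N (with a fixed sign choice). Then U is orthogonal, i.e., U Uᵗ = Uᵗ U = 1. -/
/-!
Write `N = n + 1`, `s = ±1/√N` and `a = (1 + s)/n`, so that `U` is the real matrix with
entries `δᵢⱼ - a` on the leading `n × n` block and `s` elsewhere. It is symmetric, and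
`U * U = 1` reduces to three scalar identities: `(n + 1) s² = 1` (last diagonal entry),
`n a = 1 + s` (border entries) and `n a² - 2a + s² = 0` (leading block), the last one being
`n`⁻¹ times `(1 + s)² - 2(1 + s) + n s² = (n + 1) s² - 1` by the first two.
-/

open Matrix

section BorderedMatrix

variable {R : Type*} [CommRing R] (n : ℕ) (a s : R)

def borderedMatrix : Matrix (Fin (n + 1)) (Fin (n + 1)) R :=
  of fun i j => if (i : ℕ) < n ∧ (j : ℕ) < n then (if i = j then 1 else 0) - a else s

@[simp]
lemma borderedMatrix_castSucc_castSucc (i j : Fin n) :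
    borderedMatrix n a s i.castSucc j.castSucc = (if i = j then 1 else 0) - a := by
  simp [borderedMatrix]

@[simp]
lemma borderedMatrix_castSucc_last (i : Fin n) :
    borderedMatrix n a s i.castSucc (Fin.last n) = s := by
  simp [borderedMatrix]

@[simp]
lemma borderedMatrix_last (j : Fin (n + 1)) : borderedMatrix n a s (Fin.last n) j = s := by
  simp [borderedMatrix]

lemma transpose_borderedMatrix : (borderedMatrix n a s)ᵀ = borderedMatrix n a s := by
  ext i j
  simp only [borderedMatrix, transpose_apply, of_apply, and_comm, eq_comm]

lemma borderedMatrix_mul_self_castSucc_castSucc (i k : Fin n) :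
    (borderedMatrix n a s * borderedMatrix n a s) i.castSucc k.castSucc =
      (if i = k then 1 else 0) + (n * a ^ 2 - 2 * a + s ^ 2) := by
  rw [mul_apply, Fin.sum_univ_castSucc]
  simp only [borderedMatrix_castSucc_castSucc, borderedMatrix_castSucc_last, borderedMatrix_last,
    mul_sub, sub_mul, mul_ite, ite_mul, mul_one, one_mul, mul_zero, zero_mul, Finset.sum_sub_distrib,
    Finset.sum_ite_eq, Finset.sum_ite_eq', Finset.mem_univ, ↓reduceIte, Finset.sum_const,
    Finset.card_univ, Fintype.card_fin, nsmul_eq_mul]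
  ring

lemma borderedMatrix_mul_self_castSucc_last (i : Fin n) :
    (borderedMatrix n a s * borderedMatrix n a s) i.castSucc (Fin.last n) =
      s * (1 + s - n * a) := by
  rw [mul_apply, Fin.sum_univ_castSucc]
  simp only [borderedMatrix_castSucc_castSucc, borderedMatrix_castSucc_last, borderedMatrix_last,
    sub_mul, ite_mul, one_mul, zero_mul, Finset.sum_sub_distrib, Finset.sum_ite_eq, Finset.mem_univ,
    ↓reduceIte, Finset.sum_const, Finset.card_univ, Fintype.card_fin, nsmul_eq_mul]
  ring

lemma borderedMatrix_mul_self_last_castSucc (k : Fin n) :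
    (borderedMatrix n a s * borderedMatrix n a s) (Fin.last n) k.castSucc =
      s * (1 + s - n * a) := by
  rw [mul_apply, Fin.sum_univ_castSucc]
  simp only [borderedMatrix_last, borderedMatrix_castSucc_castSucc, mul_sub, mul_ite, mul_one,
    mul_zero, Finset.sum_sub_distrib, Finset.sum_ite_eq', Finset.mem_univ, ↓reduceIte,
    Finset.sum_const, Finset.card_univ, Fintype.card_fin, nsmul_eq_mul]
  ring

lemma borderedMatrix_mul_self_last_last :
    (borderedMatrix n a s * borderedMatrix n a s) (Fin.last n) (Fin.last n) =
      (n + 1) * s ^ 2 := by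
  rw [mul_apply, Fin.sum_univ_castSucc]
  simp only [borderedMatrix_last, borderedMatrix_castSucc_last, Finset.sum_const, Finset.card_univ,
    Fintype.card_fin, nsmul_eq_mul]
  ring

lemma borderedMatrix_mul_self_eq_one [NoZeroDivisors R] (hn : (n : R) ≠ 0)
    (hborder : n * a = 1 + s) (hcorner : (n + 1) * s ^ 2 = 1) :
    borderedMatrix n a s * borderedMatrix n a s = 1 := by
  have hblock : n * a ^ 2 - 2 * a + s ^ 2 = 0 := by
    refine (mul_eq_zero.mp ?_).resolve_left hn
    linear_combination (n * a + s - 1) * hborder + hcorner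
  ext i k
  induction i using Fin.lastCases <;> induction k using Fin.lastCases
  · simp [borderedMatrix_mul_self_last_last, hcorner]
  · rw [borderedMatrix_mul_self_last_castSucc, hborder, sub_self, mul_zero,
      one_apply_ne (Fin.castSucc_ne_last _).symm]
  · rw [borderedMatrix_mul_self_castSucc_last, hborder, sub_self, mul_zero,
      one_apply_ne (Fin.castSucc_ne_last _)]
  · simp [borderedMatrix_mul_self_castSucc_castSucc, hblock, one_apply]

end BorderedMatrix

lemma borderedMatrix_mul_self_eq_one_of_sq_eq_one {n : ℕ} (hn : n ≠ 0) {ε : ℝ} (hε : ε ^ 2 = 1) :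
    borderedMatrix n (1 / n * (1 + ε / √(n + 1))) (ε / √(n + 1)) *
      borderedMatrix n (1 / n * (1 + ε / √(n + 1))) (ε / √(n + 1)) = 1 := by
  have hn' : (n : ℝ) ≠ 0 := Nat.cast_ne_zero.mpr hn
  refine borderedMatrix_mul_self_eq_one n _ _ hn' (by field_simp) ?_
  rw [div_pow, hε, Real.sq_sqrt (by positivity)]
  field_simp

/-- The matrix `U_{(N,±)}` with entries
`U_{ij} = δ_{ij} - (1/(N-1))(1 ± 1/√N)` for `i,j ∈ {1,…,N-1}` and
`U_{iN} = U_{Nj} = U_{NN} = ±1/√N` is orthogonal. -/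
theorem stmt0 (N : ℕ) (hN : 2 ≤ N) (ε : ℝ) (hε : ε = 1 ∨ ε = -1)
    (U : Matrix (Fin N) (Fin N) ℂ)
    (hU : ∀ i j : Fin N,
      U i j = if (i : ℕ) < N - 1 ∧ (j : ℕ) < N - 1 then
        ((((if i = j then (1 : ℝ) else 0) -
            (1 / ((N : ℝ) - 1)) * (1 + ε / Real.sqrt N)) : ℝ) : ℂ)
      else ((ε / Real.sqrt N : ℝ) : ℂ)) :
    U * U.transpose = 1 ∧ U.transpose * U = 1 := by
  obtain ⟨n, rfl⟩ : ∃ n, N = n + 1 := ⟨N - 1, by omega⟩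
  set B := borderedMatrix n (1 / n * (1 + ε / √(n + 1))) (ε / √(n + 1))
  have hUB : U = Complex.ofRealHom.mapMatrix B := by
    ext i j
    rw [hU]
    simp only [B, borderedMatrix, RingHom.mapMatrix_apply, map_apply, of_apply,
      Nat.add_sub_cancel, Nat.cast_add, Nat.cast_one, add_sub_cancel_right]
    exact (apply_ite _ _ _ _).symm
  have hB : B * B = 1 :=
    borderedMatrix_mul_self_eq_one_of_sq_eq_one (by omega) (by rcases hε with rfl | rfl <;> norm_num)
  have hUU : U * U = 1 := by rw [hUB, ← map_mul, hB, map_one]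
  have hUT : Uᵀ = U := by
    rw [hUB, RingHom.mapMatrix_apply, ← transpose_map, transpose_borderedMatrix]
  rw [hUT]
  exact ⟨hUU, hUU⟩
end

section
/- Let σ be a permutation of {1,…,N} fixing N, let A ∈ M_N(ℂ) be its permutation matrix A_{ij} = δ_{i,σ(j)}, and let V = V_{(N,±)} be the (N-1)×N matrix with V_{ij} = a δ_{ij} + b + c δ_{Nj} for suitable constants (the first N-1 rows of U_{(N,±)}). Then V A V* is the (N-1)×(N-1) permutation matrix of the restriction of σ to {1,…,N-1}, i.e., (V A V*)_{ij} = δ_{i,σ(j)} for i,j ≤ N-1. -/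
/-!
Every row of `V` has the form `e_a + w` with the same vector `w = (-c, …, -c, d)`, where
`c = (1 ± 1/√N)/(N-1)` and `d = ±1/√N`. Since `σ` fixes the last index, `w ∘ σ = w`, so
permuting the coordinates of the row `e_i + w` by `σ` gives `e_{σ⁻¹ i} + w`. Thus
`(V A V*)_{ij} = ⟨e_{σ⁻¹ i} + w, e_j + w⟩`, and the vectors `e_a + w` with `a ≠ N` are
orthonormal (this is `V V* = 1`) because `N d² = 1` and `(N - 1) c = 1 + d`.
-/

open Function Matrix

section uRow

variable {n R : Type*} [Fintype n] [DecidableEq n]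

/-- Row `a ≠ L` of `U_{(N,±)}`, where `L` is the last index, `c = (1 ± 1/√N)/(N-1)` and
`d = ±1/√N`. -/
def uRow [Ring R] (L : n) (c d : R) (a : n) : n → R :=
  Pi.single a 1 + update (const n (-c)) L d

omit [Fintype n] in
theorem uRow_comp_perm [Ring R] {L : n} {σ : Equiv.Perm n} (hσ : σ L = L) (c d : R) (a : n) :
    uRow L c d a ∘ σ = uRow L c d (σ.symm a) := by
  have hσL : σ.symm L = L := σ.symm_apply_eq.2 hσ.symm
  simp only [uRow, Pi.add_comp, Pi.single_comp_equiv, update_comp_equiv, hσL, const_comp]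

theorem uRow_castLE_apply [Ring R] {N : ℕ} (hN : 1 ≤ N) (c d : R) (p : Fin (N - 1))
    (l : Fin N) :
    uRow ⟨N - 1, by omega⟩ c d (Fin.castLE (Nat.sub_le N 1) p) l =
      if (l : ℕ) < N - 1 then (if (p : ℕ) = l then 1 else 0) - c else d := by
  by_cases hl : (l : ℕ) < N - 1
  · have hlL : l ≠ ⟨N - 1, by omega⟩ := fun h => by simp [h] at hl
    simp [uRow, hl, hlL, Pi.single_apply, Fin.ext_iff, eq_comm (a := (l : ℕ)), sub_eq_add_neg]
  · have hlL : l = ⟨N - 1, by omega⟩ :=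
      Fin.ext (show (l : ℕ) = N - 1 by have := l.isLt; omega)
    simp [uRow, hlL, Pi.single_apply, Fin.ext_iff]
    omega

theorem dotProduct_self_update_const [CommRing R] (L : n) (c d : R) :
    update (const n c) L d ⬝ᵥ update (const n c) L d =
      d ^ 2 + (Fintype.card n - 1) * c ^ 2 := by
  rw [dotProduct, Fintype.sum_eq_add_sum_compl L]
  have hoff : ∀ l ∈ ({L}ᶜ : Finset n),
      update (const n c) L d l * update (const n c) L d l = c ^ 2 :=
    fun l hl => by simp [update_of_ne (Finset.mem_compl.1 hl ∘ Finset.mem_singleton.2), sq]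
  rw [Finset.sum_congr rfl hoff, Finset.sum_const, Finset.card_compl, Finset.card_singleton,
    nsmul_eq_mul, Nat.cast_sub (Fintype.card_pos_iff.2 ⟨L⟩), update_self, Nat.cast_one, ← sq]

theorem uRow_dotProduct_uRow [Field R] {L a b : n} (ha : a ≠ L) (hb : b ≠ L) {c d : R}
    (hn : (Fintype.card n : R) ≠ 1) (hd : Fintype.card n * d ^ 2 = 1)
    (hc : (Fintype.card n - 1) * c = 1 + d) :
    uRow L c d a ⬝ᵥ uRow L c d b = if a = b then 1 else 0 := by
  have hw : -c + -c + (d ^ 2 + (Fintype.card n - 1) * c ^ 2) = 0 := by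
    refine (mul_right_inj' (sub_ne_zero.2 hn)).1 ?_
    linear_combination hd + ((Fintype.card n - 1) * c + d - 1) * hc
  simp only [uRow, add_dotProduct, dotProduct_add, single_dotProduct, dotProduct_single,
    dotProduct_self_update_const, update_of_ne ha, update_of_ne hb, Pi.add_apply, const_apply,
    Pi.single_apply, eq_comm (a := b), one_mul, mul_one]
  linear_combination hw

end uRow

theorem natCast_mul_div_sqrt_sq {N : ℕ} (hN : 0 < N) {ε : ℝ} (hε : ε ^ 2 = 1) :
    (N : ℝ) * (ε / Real.sqrt N) ^ 2 = 1 := by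
  rw [div_pow, hε, Real.sq_sqrt (Nat.cast_nonneg N)]
  field_simp

/-- For a permutation `σ` of `{1,…,N}` fixing the last index, with
permutation matrix `A_{ij} = δ_{i,σ(j)}` and `V = V_{(N,±)}` the first `N-1`
rows of `U_{(N,±)}`, the matrix `V A V*` is the permutation matrix of the
restriction of `σ` to the first `N-1` indices. -/
theorem stmt5 (N : ℕ) (hN : 2 ≤ N) (ε : ℝ) (hε : ε = 1 ∨ ε = -1)
    (σ : Equiv.Perm (Fin N)) (hσ : σ ⟨N - 1, by omega⟩ = ⟨N - 1, by omega⟩)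
    (A : Matrix (Fin N) (Fin N) ℂ)
    (hA : ∀ i j : Fin N, A i j = if i = σ j then 1 else 0)
    (V : Matrix (Fin (N - 1)) (Fin N) ℂ)
    (hV : ∀ (i : Fin (N - 1)) (j : Fin N), V i j =
      if (j : ℕ) < N - 1 then
        ((((if (i : ℕ) = (j : ℕ) then (1 : ℝ) else 0) -
            (1 / ((N : ℝ) - 1)) * (1 + ε / Real.sqrt N)) : ℝ) : ℂ)
      else ((ε / Real.sqrt N : ℝ) : ℂ)) :
    ∀ i j : Fin (N - 1), (V * A * V.conjTranspose) i j =
      if Fin.castLE (Nat.sub_le N 1) i = σ (Fin.castLE (Nat.sub_le N 1) j) then 1 else 0 := by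
  intro i j
  set L : Fin N := ⟨N - 1, by omega⟩
  set ι := Fin.castLE (Nat.sub_le N 1)
  set d := ε / Real.sqrt N
  set c := 1 / ((N : ℝ) - 1) * (1 + d)
  have hN1 : (N : ℝ) ≠ 1 := by exact_mod_cast (by omega : N ≠ 1)
  have hιL : ∀ p, ι p ≠ L := fun p h => by
    simp only [ι, L, Fin.ext_iff, Fin.val_castLE] at h
    omega
  have hrow : ∀ p l, V p l = ((uRow L c d (ι p) l : ℝ) : ℂ) := fun p l => by
    rw [hV, uRow_castLE_apply (by omega)]
    split_ifs <;> push_cast <;> rfl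
  have hd : (Fintype.card (Fin N) : ℝ) * d ^ 2 = 1 := by
    rw [Fintype.card_fin]
    exact natCast_mul_div_sqrt_sq (by omega) (by rcases hε with rfl | rfl <;> norm_num)
  have hc : ((Fintype.card (Fin N) : ℝ) - 1) * c = 1 + d := by
    rw [Fintype.card_fin, ← mul_assoc, mul_one_div_cancel (sub_ne_zero.2 hN1), one_mul]
  have hσι : σ.symm (ι i) ≠ L := by
    rw [Ne, σ.symm_apply_eq, hσ]
    exact hιL i
  calc (V * A * V.conjTranspose) i j
      = ((uRow L c d (ι i) ∘ σ ⬝ᵥ uRow L c d (ι j) : ℝ) : ℂ) := by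
        simp [Matrix.mul_apply, hA, hrow, dotProduct]
    _ = if ι i = σ (ι j) then 1 else 0 := by
        rw [uRow_comp_perm hσ, uRow_dotProduct_uRow hσι (hιL j) (by simpa using hN1) hd hc]
        simp [σ.symm_apply_eq, apply_ite]
end

section
/- Define on ℂ^{N} the vectors V_{js} for the matrix V = V_{(N,±)}. For all j₁,…,j_l ∈ {1,…,N-1}: ∑_{s=1}^{N} V_{j₁ s} ⋯ V_{j_l s} = ∑_{i=0}^{l} (−(1/(N-1))(1 ± 1/√N))^i δ_{b_{l,i}}(j) + (±1/√N)^l, where δ_{b_{l,i}}(j) = ∑_{|I|=i} δ_{b_{l,I}}(j) for i < l and δ_{b_{l,l}}(j) := N-1. -/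
/-! For `s < N - 1` the column `s` of `V` is `δ_{·s} + c` with `c = -(1/(N-1))(1 ± 1/√N)`,
while the last column is constantly `±1/√N` and contributes `(±1/√N)^l`. Expanding
`∏_α (c + δ_{j_α s}) = ∑_I c^|I| ∏_{α ∉ I} δ_{j_α s}` and summing over `s` first, the inner
sum counts the columns `s` equal to every `j_α` with `α ∉ I`: it is `1` if `j` is constant
off `I` and `I ≠ univ`, and `N - 1` if `I = univ`. Grouping the subsets `I` by cardinality
gives the right-hand side. -/

open Finset

theorem Finset.sum_prod_ite_eq_of_nonempty {ι κ R : Type*} [Fintype κ] [DecidableEq κ]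
    [CommSemiring R] (j : ι → κ) {t : Finset ι} (ht : t.Nonempty) :
    ∑ s : κ, ∏ α ∈ t, (if j α = s then (1 : R) else 0) =
      if ∀ α ∈ t, ∀ β ∈ t, j α = j β then 1 else 0 := by
  simp_rw [prod_boole]
  obtain ⟨α₀, hα₀⟩ := ht
  split_ifs with hconst
  · have hiff : ∀ s, (∀ α ∈ t, j α = s) ↔ j α₀ = s := fun s =>
      ⟨fun h => h α₀ hα₀, fun h α hα => (hconst α hα α₀ hα₀).trans h⟩
    simp_rw [hiff]
    simp
  · refine sum_eq_zero fun s _ => if_neg fun h => hconst fun α hα β hβ => ?_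
    exact (h α hα).trans (h β hβ).symm

theorem Fintype.sum_prod_ite_eq_add_const {ι κ R : Type*} [Fintype ι] [DecidableEq ι]
    [Fintype κ] [DecidableEq κ] [CommSemiring R] (j : ι → κ) (c : R) :
    ∑ s : κ, ∏ α, ((if j α = s then (1 : R) else 0) + c) =
      ∑ I : Finset ι, c ^ #I *
        (if I = univ then (Fintype.card κ : R)
         else if ∀ α ∉ I, ∀ β ∉ I, j α = j β then 1 else 0) := by
  simp_rw [add_comm _ c, Fintype.prod_add, prod_const]
  rw [sum_comm]
  refine Fintype.sum_congr _ _ fun I => ?_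
  rw [← mul_sum]
  congr 1
  by_cases hI : I = univ
  · simp [hI]
  · have hIc : Iᶜ.Nonempty := nonempty_iff_ne_empty.mpr (compl_eq_empty_iff I |>.not.mpr hI)
    rw [if_neg hI, sum_prod_ite_eq_of_nonempty j hIc]
    simp only [mem_compl]

theorem Fintype.sum_pow_card_mul_eq_sum_range_powersetCard {ι R : Type*} [Fintype ι]
    [DecidableEq ι] [Semiring R] (c a : R) (f : Finset ι → R) :
    ∑ I : Finset ι, c ^ #I * (if I = univ then a else f I) =
      ∑ i ∈ range (Fintype.card ι + 1),
        c ^ i * (if i = Fintype.card ι then a else ∑ I ∈ powersetCard i univ, f I) := by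
  rw [← powerset_univ, sum_powerset, card_univ]
  refine Finset.sum_congr rfl fun i _ => ?_
  split_ifs with hi
  · subst hi
    rw [← card_univ, powersetCard_self]
    simp
  · rw [mul_sum]
    refine Finset.sum_congr rfl fun I hI => ?_
    obtain ⟨-, hcard⟩ := mem_powersetCard.mp hI
    rw [hcard, if_neg]
    rintro rfl
    exact hi (hcard ▸ card_univ)

theorem stmt8_general (N l : ℕ) (hN : 2 ≤ N) (ε : ℝ)
    (V : Fin (N - 1) → Fin N → ℝ)
    (hV : ∀ (p : Fin (N - 1)) (s : Fin N), V p s =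
      if (s : ℕ) < N - 1 then
        (if (p : ℕ) = (s : ℕ) then 1 else 0) - (1 / ((N : ℝ) - 1)) * (1 + ε / Real.sqrt N)
      else ε / Real.sqrt N)
    (j : Fin l → Fin (N - 1)) :
    (∑ s : Fin N, ∏ α : Fin l, V (j α) s) =
      (∑ i ∈ Finset.range (l + 1),
        (-(1 / ((N : ℝ) - 1)) * (1 + ε / Real.sqrt N)) ^ i *
          (if i = l then (N : ℝ) - 1
           else ∑ I ∈ Finset.powersetCard i (Finset.univ : Finset (Fin l)),
             (if ∀ α ∉ I, ∀ β ∉ I, j α = j β then (1 : ℝ) else 0)))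
      + (ε / Real.sqrt N) ^ l := by
  obtain ⟨n, rfl⟩ : ∃ n, N = n + 1 := ⟨N - 1, by omega⟩
  set c : ℝ := -(1 / (((n + 1 : ℕ) : ℝ) - 1)) * (1 + ε / Real.sqrt (n + 1 : ℕ))
  have hcol : ∀ (p : Fin n) (s : Fin n), V p s.castSucc = (if p = s then 1 else 0) + c := by
    intro p s
    simp [hV, c, Fin.val_inj, sub_eq_add_neg]
  have hlast : ∀ p, V p (Fin.last n) = ε / Real.sqrt (n + 1 : ℕ) := by
    intro p
    simp [hV]
  rw [Fin.sum_univ_castSucc]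
  simp only [hcol, hlast, prod_const, card_univ, Fintype.card_fin]
  rw [Fintype.sum_prod_ite_eq_add_const, Fintype.sum_pow_card_mul_eq_sum_range_powersetCard]
  push_cast [Fintype.card_fin, add_sub_cancel_right]
  -- the sides differ only in the `Decidable` instance of the constancy condition
  congr!

/-- For the rows `V_{js}` of `V = V_{(N,±)}` and any indices
`j₁,…,j_l ∈ {1,…,N-1}`:
`∑_{s=1}^{N} V_{j₁s} ⋯ V_{j_l s} = ∑_{i=0}^{l} (−(1/(N-1))(1±1/√N))^i δ_{b_{l,i}}(j) + (±1/√N)^l`,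
where `δ_{b_{l,i}}(j) = ∑_{|I|=i} δ_{b_{l,I}}(j)` for `i < l` and `δ_{b_{l,l}}(j) := N-1`. -/
theorem stmt8 (N l : ℕ) (hN : 2 ≤ N) (ε : ℝ) (hε : ε = 1 ∨ ε = -1)
    (V : Fin (N - 1) → Fin N → ℝ)
    (hV : ∀ (p : Fin (N - 1)) (s : Fin N), V p s =
      if (s : ℕ) < N - 1 then
        (if (p : ℕ) = (s : ℕ) then 1 else 0) - (1 / ((N : ℝ) - 1)) * (1 + ε / Real.sqrt N)
      else ε / Real.sqrt N)
    (j : Fin l → Fin (N - 1)) :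
    (∑ s : Fin N, ∏ α : Fin l, V (j α) s) =
      (∑ i ∈ Finset.range (l + 1),
        (-(1 / ((N : ℝ) - 1)) * (1 + ε / Real.sqrt N)) ^ i *
          (if i = l then (N : ℝ) - 1
           else ∑ I ∈ Finset.powersetCard i (Finset.univ : Finset (Fin l)),
             (if ∀ α ∉ I, ∀ β ∉ I, j α = j β then (1 : ℝ) else 0)))
      + (ε / Real.sqrt N) ^ l :=
  stmt8_general N l hN ε V hV j
end

section
/- Let U = U_{(N,±)}, P the projection onto span{ξ}^⊥ (entries δ_{ij} - 1/N), and E ∈ M_N(ℂ) the diagonal projection E = diag(1,…,1,0). Then U P = E U. -/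
/-! Since `P = 1 - ξ ξᵀ / N`, the matrix `U P` is `U` with each row's mean subtracted from it.
The constant `(1 + ε/√N)/(N - 1)` on the first `N - 1` rows of `U` is exactly what makes
those rows sum to zero, while the last row is constant; so `U P` keeps the first `N - 1` rows
of `U` and kills the last one, which is `E U`. -/

open Finset

theorem Matrix.mul_apply_eq_sub_sum_mul {n R : Type*} [Fintype n] [DecidableEq n] [Ring R]
    (A P : Matrix n n R) (c : R) (hP : ∀ i j, P i j = (if i = j then 1 else 0) - c) (i j : n) :
    (A * P) i j = A i j - (∑ k, A i k) * c := by
  simp only [Matrix.mul_apply, hP, mul_sub, mul_ite, mul_one, mul_zero, sum_sub_distrib,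
    sum_ite_eq', mem_univ, if_true, sum_mul]

theorem Matrix.mul_apply_of_diag_indicator {n R : Type*} [Fintype n] [DecidableEq n] [Semiring R]
    (E A : Matrix n n R) (p : n → Prop) [DecidablePred p]
    (hE : ∀ i j, E i j = if i = j ∧ p i then 1 else 0) (i j : n) :
    (E * A) i j = if p i then A i j else 0 := by
  simp only [Matrix.mul_apply, hE, ite_and, ite_mul, one_mul, zero_mul, sum_ite_eq, mem_univ,
    if_true]

theorem Fin.sum_eq_of_lt_last {R : Type*} [CommRing R] {n : ℕ} (a b : R) (f : Fin (n + 1) → R)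
    (i : Fin (n + 1)) (hi : (i : ℕ) < n)
    (hf : ∀ k : Fin (n + 1), f k = if (k : ℕ) < n then (if i = k then 1 else 0) - a else b) :
    ∑ k, f k = 1 - n * a + b := by
  obtain ⟨i, rfl⟩ : ∃ i' : Fin n, i = i'.castSucc := ⟨⟨i, hi⟩, rfl⟩
  simp [Fin.sum_univ_castSucc, hf, sum_sub_distrib]

theorem stmt10_general (N : ℕ) (ε : ℝ)
    (U : Matrix (Fin N) (Fin N) ℂ)
    (hU : ∀ i j : Fin N,
      U i j = if (i : ℕ) < N - 1 ∧ (j : ℕ) < N - 1 then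
        ((((if i = j then (1 : ℝ) else 0) -
            (1 / ((N : ℝ) - 1)) * (1 + ε / Real.sqrt N)) : ℝ) : ℂ)
      else ((ε / Real.sqrt N : ℝ) : ℂ))
    (P : Matrix (Fin N) (Fin N) ℂ)
    (hP : ∀ i j : Fin N, P i j = (if i = j then 1 else 0) - 1 / (N : ℂ))
    (E : Matrix (Fin N) (Fin N) ℂ)
    (hE : ∀ i j : Fin N, E i j = if i = j ∧ (i : ℕ) < N - 1 then 1 else 0) :
    U * P = E * U := by
  ext i j
  rw [U.mul_apply_eq_sub_sum_mul P _ hP, E.mul_apply_of_diag_indicator U _ hE]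
  obtain ⟨n, rfl⟩ : ∃ n, N = n + 1 := ⟨N - 1, by have := i.pos; omega⟩
  simp only [Nat.add_sub_cancel] at hU ⊢
  split_ifs with hi
  · have hn : (n : ℂ) ≠ 0 := by exact_mod_cast (Nat.zero_lt_of_lt hi).ne'
    have hrow : ∑ k, U i k = 0 := by
      rw [Fin.sum_eq_of_lt_last (((1 / ((n + 1 : ℕ) - 1 : ℝ)) * (1 + ε / √(n + 1 : ℕ)) : ℝ) : ℂ)
        ((ε / √(n + 1 : ℕ) : ℝ) : ℂ) _ i hi fun k => by
          by_cases hk : (k : ℕ) < n <;> simp [hU, hi, hk, apply_ite ((↑) : ℝ → ℂ)]]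
      push_cast
      rw [add_sub_cancel_right]
      field_simp
      ring
    rw [hrow, zero_mul, sub_zero]
  · have hconst : ∀ k, U i k = ((ε / Real.sqrt (n + 1 : ℕ) : ℝ) : ℂ) := fun k => by
      rw [hU, if_neg fun h => hi h.1]
    simp only [hconst, sum_const, card_univ, Fintype.card_fin, nsmul_eq_mul]
    field_simp
    ring

/-- With `U = U_{(N,±)}`, `P` the projection onto `span{ξ}^⊥`
(entries `δ_{ij} - 1/N`), and `E = diag(1,…,1,0)`, one has `U P = E U`. -/
theorem stmt10 (N : ℕ) (hN : 2 ≤ N) (ε : ℝ) (hε : ε = 1 ∨ ε = -1)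
    (U : Matrix (Fin N) (Fin N) ℂ)
    (hU : ∀ i j : Fin N,
      U i j = if (i : ℕ) < N - 1 ∧ (j : ℕ) < N - 1 then
        ((((if i = j then (1 : ℝ) else 0) -
            (1 / ((N : ℝ) - 1)) * (1 + ε / Real.sqrt N)) : ℝ) : ℂ)
      else ((ε / Real.sqrt N : ℝ) : ℂ))
    (P : Matrix (Fin N) (Fin N) ℂ)
    (hP : ∀ i j : Fin N, P i j = (if i = j then 1 else 0) - 1 / (N : ℂ))
    (E : Matrix (Fin N) (Fin N) ℂ)
    (hE : ∀ i j : Fin N, E i j = if i = j ∧ (i : ℕ) < N - 1 then 1 else 0) :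
    U * P = E * U :=
  stmt10_general N ε U hU P hP E hE
end

section
/- For N ≥ k + l, the maps {T_p : p ∈ 𝒫(k,l)} are linearly independent in L((ℂ^N)^{⊗k}, (ℂ^N)^{⊗l}); hence the assignment p ↦ T_p restricted to 𝒫(k,l) is injective on linear combinations. -/
/-! Since `N ≥ k + l`, every partition `q` of the `k + l` points is the kernel of some index
assignment `f q` into `Fin N`, and `T_p` evaluated at `f q` is `1` if `p` refines `q` and `0`
otherwise. The matrix of these evaluations is unitriangular for the refinement order, so a
vanishing linear combination of the `T_p` has no refinement-minimal term. -/

theorem linearIndependent_of_triangular {R M ι : Type*} [Ring R] [NoZeroDivisors R]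
    [AddCommGroup M] [Module R M] [PartialOrder ι] (v : ι → M) (φ : ι → M →ₗ[R] R)
    (hdiag : ∀ q, φ q (v q) ≠ 0) (htri : ∀ p q, φ q (v p) ≠ 0 → p ≤ q) :
    LinearIndependent R v := by
  classical
  rw [linearIndependent_iff]
  intro g hg
  by_contra hg_ne
  obtain ⟨q, hq, hq_min⟩ := g.support.exists_minimal (Finsupp.support_nonempty_iff.mpr hg_ne)
  have hsum : ∑ p ∈ g.support, g p * φ q (v p) = g q * φ q (v q) := by
    refine Finset.sum_eq_single_of_mem q hq fun p hp hpq => ?_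
    by_contra hne
    have hle : p ≤ q := htri p q (right_ne_zero_of_mul hne)
    exact hpq (le_antisymm hle (hq_min hp hle))
  have heval := congrArg (φ q) hg
  simp only [Finsupp.linearCombination_apply, Finsupp.sum, map_sum, map_smul, smul_eq_mul,
    map_zero, hsum] at heval
  exact mul_ne_zero (Finsupp.mem_support_iff.mp hq) (hdiag q) heval

theorem Setoid.exists_ker_eq_of_card_le {α β : Type*} [Fintype α] [Fintype β] (r : Setoid α)
    (h : Fintype.card α ≤ Fintype.card β) : ∃ f : α → β, Setoid.ker f = r := by
  classical
  obtain ⟨e⟩ := Function.Embedding.nonempty_of_card_le ((Fintype.card_quotient_le r).trans h)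
  exact ⟨e ∘ Quotient.mk r, Setoid.ext fun _ _ => e.injective.eq_iff.trans Quotient.eq⟩

theorem Setoid.le_ker_iff {α β : Type*} {r : Setoid α} {f : α → β} :
    r ≤ Setoid.ker f ↔ ∀ x y, r x y → f x = f y :=
  ⟨fun h _ _ hxy => h hxy, fun h _ _ hxy => h _ _ hxy⟩

open Classical in
/-- For `N ≥ k + l`, the maps `T_p` for `p ∈ 𝒫(k,l)` (partitions
of the `k + l` points, realized as setoids on `Fin k ⊕ Fin l`, with
`(T_p)_{j,i} = δ_p(i,j)`) are linearly independent; hence `p ↦ T_p` is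
injective on linear combinations. -/
theorem stmt14 (N k l : ℕ) (h : k + l ≤ N) :
    LinearIndependent ℂ (fun p : Setoid (Fin k ⊕ Fin l) =>
      fun (jl : Fin l → Fin N) (ik : Fin k → Fin N) =>
        (if ∀ x y, p.r x y → Sum.elim ik jl x = Sum.elim ik jl y
         then (1 : ℂ) else 0)) := by
  choose f hf using fun q : Setoid (Fin k ⊕ Fin l) =>
    q.exists_ker_eq_of_card_le (β := Fin N) (by simpa using h)
  let φ q : ((Fin l → Fin N) → (Fin k → Fin N) → ℂ) →ₗ[ℂ] ℂ :=
    LinearMap.proj (f q ∘ Sum.inl) ∘ₗ LinearMap.proj (f q ∘ Sum.inr)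
  have hφ : ∀ p q, φ q (fun jl ik => if ∀ x y, p.r x y → Sum.elim ik jl x = Sum.elim ik jl y
      then (1 : ℂ) else 0) = if p ≤ q then 1 else 0 := by
    intro p q
    simp only [φ, LinearMap.coe_comp, Function.comp_apply, LinearMap.coe_proj, Function.eval,
      Sum.elim_comp_inl_inr, ← Setoid.le_ker_iff, hf]
  refine linearIndependent_of_triangular _ φ (fun q => ?_) (fun p q => ?_) <;> rw [hφ]
  · simp
  · exact fun hne => by_contra fun hpq => hne (if_neg hpq)
end

section
/- Let G act via maps: if T ∈ Mor(u^{⊗k}, u^{⊗l}) (i.e. T u^{⊗k} = u^{⊗l} T for a unitary matrix u over a C*-algebra with the projection P = V*V commuting with u), then V^{⊗l} T V*^{⊗k} intertwines v^{⊗k} and v^{⊗l} where v = V u V*; conversely every intertwiner of v^{⊗k}, v^{⊗l} is of this form. Formally: {V^{⊗l} T V*^{⊗k} : T u^{⊗k} = u^{⊗l} T} = {S : S v^{⊗k} = v^{⊗l} S}. -/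
/-- Entrywise `k`-th tensor (Kronecker) power of a square matrix over a
(possibly noncommutative) ring, with entries multiplied in order. -/
def tensorPowSq {A : Type*} [Ring A] {N : ℕ} (u : Matrix (Fin N) (Fin N) A) (k : ℕ) :
    Matrix (Fin k → Fin N) (Fin k → Fin N) A :=
  fun i j => (List.ofFn (fun a : Fin k => u (i a) (j a))).prod

/-- Entrywise `k`-th tensor (Kronecker) power of a rectangular complex matrix. -/
def tensorPowRect {m n : ℕ} (V : Matrix (Fin m) (Fin n) ℂ) (k : ℕ) :
    Matrix (Fin k → Fin m) (Fin k → Fin n) ℂ :=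
  fun i j => ∏ a : Fin k, V (i a) (j a)

/-!
Write `W = V*`. From `V W = 1` and `W V u = u W V` one gets `(V u W) V = V u` and
`W (V u W) = u W`: `V` intertwines `u` with its compression `v = V u W`, and `W` intertwines
`v` with `u`. Both facts pass to tensor powers, since `X ↦ X^{⊗k}` is multiplicative on
matrices whose entries commute with each other, and complex scalars commute with all of `A`.
So `V^{⊗l} T W^{⊗k}` is a composite of intertwiners whenever `T` is one, and conversely an
intertwiner `S` of `v^{⊗k}, v^{⊗l}` is the compression of the intertwiner `W^{⊗l} S V^{⊗k}`.
-/

namespace Matrix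

section Compression

variable {A : Type*} [Semiring A] {m n m' n' : Type*} [Fintype m] [Fintype n] [Fintype m']
  [Fintype n'] [DecidableEq m] [DecidableEq m']

theorem compression_mul_eq {V : Matrix m n A} {W : Matrix n m A} {U : Matrix n n A}
    (hVW : V * W = 1) (hPU : Commute (W * V) U) : V * U * W * V = V * U := by
  calc V * U * W * V = V * (U * (W * V)) := by simp only [Matrix.mul_assoc]
    _ = V * U := by rw [← hPU.eq, ← Matrix.mul_assoc, ← Matrix.mul_assoc, hVW, Matrix.one_mul]

theorem mul_compression_eq {V : Matrix m n A} {W : Matrix n m A} {U : Matrix n n A}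
    (hVW : V * W = 1) (hPU : Commute (W * V) U) : W * (V * U * W) = U * W := by
  calc W * (V * U * W) = W * V * U * W := by simp only [Matrix.mul_assoc]
    _ = U * W := by rw [hPU.eq]; simp only [Matrix.mul_assoc, hVW, Matrix.mul_one]

variable {Vk : Matrix m n A} {Wk : Matrix n m A} {Vl : Matrix m' n' A} {Wl : Matrix n' m' A}
  {Uk : Matrix n n A} {Ul : Matrix n' n' A}

theorem compress_intertwiner (hk : Vk * Wk = 1) (hl : Vl * Wl = 1)
    (hPk : Commute (Wk * Vk) Uk) (hPl : Commute (Wl * Vl) Ul) {T : Matrix n' n A}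
    (hT : T * Uk = Ul * T) :
    Vl * T * Wk * (Vk * Uk * Wk) = Vl * Ul * Wl * (Vl * T * Wk) :=
  calc Vl * T * Wk * (Vk * Uk * Wk) = Vl * T * (Wk * (Vk * Uk * Wk)) := by
        simp only [Matrix.mul_assoc]
    _ = Vl * (T * Uk) * Wk := by rw [mul_compression_eq hk hPk]; simp only [Matrix.mul_assoc]
    _ = Vl * Ul * Wl * Vl * T * Wk := by
        rw [hT, compression_mul_eq hl hPl]; simp only [Matrix.mul_assoc]
    _ = Vl * Ul * Wl * (Vl * T * Wk) := by simp only [Matrix.mul_assoc]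

theorem dilate_intertwiner (hk : Vk * Wk = 1) (hl : Vl * Wl = 1)
    (hPk : Commute (Wk * Vk) Uk) (hPl : Commute (Wl * Vl) Ul) {S : Matrix m' m A}
    (hS : S * (Vk * Uk * Wk) = Vl * Ul * Wl * S) :
    Wl * S * Vk * Uk = Ul * (Wl * S * Vk) :=
  calc Wl * S * Vk * Uk = Wl * (S * (Vk * Uk * Wk)) * Vk := by
        conv_lhs => rw [Matrix.mul_assoc (Wl * S), ← compression_mul_eq hk hPk]
        simp only [Matrix.mul_assoc]
    _ = Wl * (Vl * Ul * Wl) * S * Vk := by rw [hS]; simp only [Matrix.mul_assoc]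
    _ = Ul * (Wl * S * Vk) := by rw [mul_compression_eq hl hPl]; simp only [Matrix.mul_assoc]

end Compression

section Intertwiners

variable {R A : Type*} [CommSemiring R] [Semiring A] [Algebra R A]
  {m n m' n' : Type*} [Fintype m] [Fintype n] [Fintype m'] [Fintype n']
  [DecidableEq m] [DecidableEq m']

omit [Fintype m] in
theorem map_mul_map_eq_one {X : Matrix m n R} {Y : Matrix n m R} (h : X * Y = 1) :
    X.map (algebraMap R A) * Y.map (algebraMap R A) = 1 := by
  rw [← Matrix.map_mul, h, Matrix.map_one _ (map_zero _) (map_one _)]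

theorem setOf_compress_intertwiner_eq {Vk : Matrix m n R} {Wk : Matrix n m R}
    {Vl : Matrix m' n' R} {Wl : Matrix n' m' R} {Uk : Matrix n n A} {Ul : Matrix n' n' A}
    (hk : Vk * Wk = 1) (hl : Vl * Wl = 1)
    (hPk : Commute ((Wk * Vk).map (algebraMap R A)) Uk)
    (hPl : Commute ((Wl * Vl).map (algebraMap R A)) Ul) :
    {S : Matrix m' m R | ∃ T : Matrix n' n R,
      T.map (algebraMap R A) * Uk = Ul * T.map (algebraMap R A) ∧ S = Vl * T * Wk} =
    {S : Matrix m' m R | S.map (algebraMap R A) *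
        (Vk.map (algebraMap R A) * Uk * Wk.map (algebraMap R A)) =
      Vl.map (algebraMap R A) * Ul * Wl.map (algebraMap R A) * S.map (algebraMap R A)} := by
  have hk' := map_mul_map_eq_one (A := A) hk
  have hl' := map_mul_map_eq_one (A := A) hl
  rw [Matrix.map_mul] at hPk hPl
  ext S
  simp only [Set.mem_ofPred_eq]
  constructor
  · rintro ⟨T, hT, rfl⟩
    simpa only [Matrix.map_mul] using compress_intertwiner hk' hl' hPk hPl hT
  · intro hS
    refine ⟨Wl * S * Vk, ?_, ?_⟩
    · simpa only [Matrix.map_mul] using dilate_intertwiner hk' hl' hPk hPl hS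
    · calc S = Vl * Wl * S * (Vk * Wk) := by rw [hk, hl, Matrix.one_mul, Matrix.mul_one]
        _ = Vl * (Wl * S * Vk) * Wk := by simp only [Matrix.mul_assoc]

end Intertwiners

section TensorPow

variable {A : Type*} [Semiring A] {m n p : Type*}

def tensorPow (X : Matrix m n A) (k : ℕ) : Matrix (Fin k → m) (Fin k → n) A :=
  fun i j => (List.ofFn fun a => X (i a) (j a)).prod

theorem tensorPow_succ_apply {k : ℕ} (X : Matrix m n A) (i : Fin (k + 1) → m)
    (j : Fin (k + 1) → n) :
    tensorPow X (k + 1) i j = X (i 0) (j 0) * tensorPow X k (i ∘ Fin.succ) (j ∘ Fin.succ) := by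
  simp [tensorPow, List.ofFn_succ]

theorem commute_tensorPow_apply {x : A} {k : ℕ} {X : Matrix m n A}
    (h : ∀ i j, Commute x (X i j)) (i : Fin k → m) (j : Fin k → n) :
    Commute x (tensorPow X k i j) :=
  Commute.list_prod_right _ _ fun _ hy => by
    obtain ⟨a, rfl⟩ := List.mem_ofFn.mp hy
    exact h _ _

theorem tensorPow_mul_of_commute [Fintype n] (k : ℕ) {X : Matrix m n A} {Y : Matrix n p A}
    (h : ∀ i j i' j', Commute (X i j) (Y i' j')) :
    tensorPow (X * Y) k = tensorPow X k * tensorPow Y k := by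
  induction k with
  | zero => ext i j; simp [tensorPow, Matrix.mul_apply]
  | succ k ih =>
    ext i j
    rw [tensorPow_succ_apply, ih, Matrix.mul_apply, Matrix.mul_apply, Finset.sum_mul_sum,
      Matrix.mul_apply, ← (Fin.consEquiv fun _ => n).sum_comp, Fintype.sum_prod_type]
    refine Finset.sum_congr rfl fun c _ => Finset.sum_congr rfl fun t _ => ?_
    have hc : (Fin.cons c t : Fin (k + 1) → n) ∘ Fin.succ = t :=
      funext fun _ => Fin.cons_succ ..
    change _ = tensorPow X (k + 1) i (Fin.cons c t) * tensorPow Y (k + 1) (Fin.cons c t) j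
    rw [tensorPow_succ_apply, tensorPow_succ_apply, Fin.cons_zero, hc, mul_assoc, mul_assoc,
      ← mul_assoc (Y c (j 0)),
      (commute_tensorPow_apply (fun _ _ => (h _ _ _ _).symm) _ _).eq, mul_assoc]

theorem tensorPow_one [DecidableEq n] (k : ℕ) : tensorPow (1 : Matrix n n A) k = 1 := by
  ext i j
  rcases eq_or_ne i j with rfl | hij
  · simp [tensorPow]
  · obtain ⟨a, ha⟩ := Function.ne_iff.mp hij
    rw [Matrix.one_apply_ne hij]
    exact List.prod_eq_zero (List.mem_ofFn.mpr ⟨a, Matrix.one_apply_ne ha⟩)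

theorem tensorPow_map {B : Type*} [Semiring B] (f : A →+* B) (X : Matrix m n A) (k : ℕ) :
    (tensorPow X k).map f = tensorPow (X.map f) k := by
  ext i j
  simp [tensorPow, map_list_prod, List.map_ofFn, Function.comp_def]

end TensorPow

section CommTensorPow

variable {R : Type*} [CommSemiring R] {m n p : Type*}

theorem tensorPow_mul [Fintype n] (k : ℕ) (X : Matrix m n R) (Y : Matrix n p R) :
    tensorPow (X * Y) k = tensorPow X k * tensorPow Y k :=
  tensorPow_mul_of_commute k fun _ _ _ _ => Commute.all _ _

theorem conjTranspose_tensorPow [StarRing R] (X : Matrix m n R) (k : ℕ) :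
    (tensorPow X k)ᴴ = tensorPow Xᴴ k := by
  ext i j
  simp [tensorPow, List.prod_ofFn, star_prod]

variable {A : Type*} [Semiring A] [Algebra R A] [Fintype n] (k : ℕ)

theorem tensorPow_map_mul (X : Matrix m n R) (Y : Matrix n p A) :
    tensorPow (X.map (algebraMap R A) * Y) k =
      (tensorPow X k).map (algebraMap R A) * tensorPow Y k := by
  rw [tensorPow_mul_of_commute (X := X.map (algebraMap R A)) k
    fun _ _ _ _ => Algebra.commutes _ _, tensorPow_map]

theorem tensorPow_mul_map (X : Matrix m n A) (Y : Matrix n p R) :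
    tensorPow (X * Y.map (algebraMap R A)) k =
      tensorPow X k * (tensorPow Y k).map (algebraMap R A) := by
  rw [tensorPow_mul_of_commute (Y := Y.map (algebraMap R A)) k
    fun _ _ _ _ => (Algebra.commutes _ _).symm, tensorPow_map]

theorem commute_map_tensorPow {P : Matrix n n R} {U : Matrix n n A}
    (h : Commute (P.map (algebraMap R A)) U) :
    Commute ((tensorPow P k).map (algebraMap R A)) (tensorPow U k) := by
  rw [Commute, SemiconjBy, ← tensorPow_map_mul, h.eq, tensorPow_mul_map]

end CommTensorPow

end Matrix

open Matrix

theorem tensorPowSq_eq_tensorPow {A : Type*} [Ring A] {N : ℕ} (u : Matrix (Fin N) (Fin N) A)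
    (k : ℕ) : tensorPowSq u k = tensorPow u k := rfl

theorem tensorPowRect_eq_tensorPow {m n : ℕ} (V : Matrix (Fin m) (Fin n) ℂ) (k : ℕ) :
    tensorPowRect V k = tensorPow V k := by
  ext i j
  exact List.prod_ofFn.symm

theorem stmt16_general (N k l : ℕ) (A : Type*) [CStarAlgebra A]
    (u : Matrix (Fin N) (Fin N) A)
    (V : Matrix (Fin (N - 1)) (Fin N) ℂ)
    (hVV : V * V.conjTranspose = 1)
    (hPu : ((V.conjTranspose * V).map (algebraMap ℂ A)) * u =
      u * ((V.conjTranspose * V).map (algebraMap ℂ A))) :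
    {S : Matrix (Fin l → Fin (N - 1)) (Fin k → Fin (N - 1)) ℂ |
      ∃ T : Matrix (Fin l → Fin N) (Fin k → Fin N) ℂ,
        (T.map (algebraMap ℂ A)) * tensorPowSq u k =
          tensorPowSq u l * (T.map (algebraMap ℂ A)) ∧
        S = tensorPowRect V l * T * (tensorPowRect V k).conjTranspose} =
    {S : Matrix (Fin l → Fin (N - 1)) (Fin k → Fin (N - 1)) ℂ |
      (S.map (algebraMap ℂ A)) *
        tensorPowSq ((V.map (algebraMap ℂ A)) * u * ((V.conjTranspose).map (algebraMap ℂ A))) k =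
      tensorPowSq ((V.map (algebraMap ℂ A)) * u * ((V.conjTranspose).map (algebraMap ℂ A))) l *
        (S.map (algebraMap ℂ A))} := by
  have hunit (q : ℕ) : tensorPow V q * tensorPow Vᴴ q = 1 := by
    rw [← tensorPow_mul, hVV, tensorPow_one]
  have hcomm (q : ℕ) :
      Commute ((tensorPow Vᴴ q * tensorPow V q).map (algebraMap ℂ A)) (tensorPow u q) := by
    rw [← tensorPow_mul]
    exact commute_map_tensorPow q hPu
  simp only [tensorPowSq_eq_tensorPow, tensorPowRect_eq_tensorPow, conjTranspose_tensorPow,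
    tensorPow_mul_map, tensorPow_map_mul]
  exact setOf_compress_intertwiner_eq (hunit k) (hunit l) (hcomm k) (hcomm l)

/-- Given a unitary `u ∈ M_N(A)` over a unital C*-algebra `A` and
a coisometry `V` with `P = V*V` commuting with `u`, setting `v = V u V*`, the
intertwiners of `v^{⊗k}, v^{⊗l}` are exactly the compressions
`V^{⊗l} T V*^{⊗k}` of intertwiners `T` of `u^{⊗k}, u^{⊗l}`. -/
theorem stmt16 (N k l : ℕ) (hN : 2 ≤ N) (A : Type*) [CStarAlgebra A]
    (u : Matrix (Fin N) (Fin N) A)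
    (hu1 : u * u.conjTranspose = 1) (hu2 : u.conjTranspose * u = 1)
    (V : Matrix (Fin (N - 1)) (Fin N) ℂ)
    (hVV : V * V.conjTranspose = 1)
    (hPu : ((V.conjTranspose * V).map (algebraMap ℂ A)) * u =
      u * ((V.conjTranspose * V).map (algebraMap ℂ A))) :
    {S : Matrix (Fin l → Fin (N - 1)) (Fin k → Fin (N - 1)) ℂ |
      ∃ T : Matrix (Fin l → Fin N) (Fin k → Fin N) ℂ,
        (T.map (algebraMap ℂ A)) * tensorPowSq u k =
          tensorPowSq u l * (T.map (algebraMap ℂ A)) ∧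
        S = tensorPowRect V l * T * (tensorPowRect V k).conjTranspose} =
    {S : Matrix (Fin l → Fin (N - 1)) (Fin k → Fin (N - 1)) ℂ |
      (S.map (algebraMap ℂ A)) *
        tensorPowSq ((V.map (algebraMap ℂ A)) * u * ((V.conjTranspose).map (algebraMap ℂ A))) k =
      tensorPowSq ((V.map (algebraMap ℂ A)) * u * ((V.conjTranspose).map (algebraMap ℂ A))) l *
        (S.map (algebraMap ℂ A))} :=
  stmt16_general N k l A u V hVV hPu
end

section
/- The linear map 𝒱 = 𝒱_{(N,±)} on linear combinations of partitions satisfies: for every partition p, 𝒱p = p + q where q is a linear combination of partitions each containing at least one singleton; consequently, the kernel of 𝒱 restricted to 𝒫_{N-lin}(k,l) equals the span of partitions in 𝒫(k,l) containing a singleton. -/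
/-- The partition obtained from `p` by disconnecting the points of `S`
(turning them into singletons). -/
def disconnect {n : ℕ} (p : Setoid (Fin n)) (S : Finset (Fin n)) : Setoid (Fin n) where
  r x y := x = y ∨ (x ∉ S ∧ y ∉ S ∧ p.r x y)
  iseqv := by
    constructor
    · intro x; exact Or.inl rfl
    · intro x y h
      rcases h with h | ⟨hx, hy, hr⟩
      · exact Or.inl h.symm
      · exact Or.inr ⟨hy, hx, p.iseqv.symm hr⟩
    · intro x y z hxy hyz
      rcases hxy with rfl | ⟨hx, hy, hr⟩
      · exact hyz
      · rcases hyz with rfl | ⟨hy', hz, hr'⟩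
        · exact Or.inr ⟨hx, hy, hr⟩
        · exact Or.inr ⟨hx, hz, p.iseqv.trans hr hr'⟩

/-- `p` contains a singleton block. -/
def hasSingleton {n : ℕ} (p : Setoid (Fin n)) : Prop :=
  ∃ x, ∀ y, p.r x y → y = x

open Classical in
/-- The block of the point `x` in the partition `p`. -/
noncomputable def blk {n : ℕ} (p : Setoid (Fin n)) (x : Fin n) : Finset (Fin n) :=
  Finset.univ.filter (fun y => p.r x y)

open Classical in
/-- The set of minimal representatives of the blocks of `p`. -/
noncomputable def reps {n : ℕ} (p : Setoid (Fin n)) : Finset (Fin n) :=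
  Finset.univ.filter (fun x => ∀ y, p.r x y → x ≤ y)

/-- The coefficient in `𝒱_{(N,±)}` of the partition obtained from a block of
size `k` by disconnecting `i` of its points: `(−(1/(N-1))(1 ± 1/√N))^i` for
`i < k`, while disconnecting a whole block (`i = k`, giving all singletons)
contributes `(N-1)·c^k + (±1/√N)^k`, accounting for the terms
`b_{k,k} = (N-1)·↑^{⊗k}` and `(±1/√N)^k ↑^{⊗k}` of Definition D.VK. -/
noncomputable def vWeight (N : ℕ) (ε : ℝ) (k i : ℕ) : ℂ :=
  if i = k then
    ((((N : ℝ) - 1) * (-(1 / ((N : ℝ) - 1)) * (1 + ε / Real.sqrt N)) ^ k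
      + (ε / Real.sqrt N) ^ k : ℝ) : ℂ)
  else (((-(1 / ((N : ℝ) - 1)) * (1 + ε / Real.sqrt N)) ^ i : ℝ) : ℂ)

/-- The coefficient of `disconnect p S` in `𝒱_{(N,±)} p`: a product over the
blocks of `p` of the weights determined by the block size and the number of
its points that get disconnected (the map `𝒱` acts blockwise). -/
noncomputable def vCoeff (N : ℕ) (ε : ℝ) {n : ℕ} (p : Setoid (Fin n))
    (S : Finset (Fin n)) : ℂ :=
  ∏ x ∈ reps p, vWeight N ε (blk p x).card ((blk p x) ∩ S).card

/-- The linear map `𝒱_{(N,±)} : 𝒫_{N-lin} → 𝒫_{(N-1)-lin}` on formal linear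
combinations of partitions of `n` points, defined blockwise as in
Definition D.VK. -/
noncomputable def Vmap (N : ℕ) (ε : ℝ) (n : ℕ) :
    (Setoid (Fin n) →₀ ℂ) →ₗ[ℂ] (Setoid (Fin n) →₀ ℂ) :=
  Finsupp.lsum ℂ (fun p => LinearMap.toSpanSingleton ℂ _
    (∑ S ∈ (Finset.univ : Finset (Fin n)).powerset,
      vCoeff N ε p S • Finsupp.single (disconnect p S) (1 : ℂ)))

/-!
Expand `𝒱 p` as a sum over the sets `S` of points to disconnect. The term `S = ∅` is `p` itself
with coefficient `1`, and every other term has a singleton. If `p` already has a singleton `x`,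
the terms for `S` and `S ∪ {x}` give the same partition, and their coefficients are opposite:
the block `{x}` has weight `1` when kept and weight `(N - 1)c + ε/√N = -1` when disconnected,
where `c = -(1 + ε/√N)/(N - 1)`. So `𝒱` kills the span `W` of partitions with a singleton,
while `𝒱 - id` maps everything into `W`; together these force `ker 𝒱 = W`.
-/

open Finsupp

theorem LinearMap.ker_eq_of_le_of_forall_sub_mem {R M : Type*} [Ring R] [AddCommGroup M]
    [Module R M] {f : M →ₗ[R] M} {W : Submodule R M} (hW : W ≤ LinearMap.ker f)
    (hf : ∀ x, f x - x ∈ W) : LinearMap.ker f = W := by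
  refine le_antisymm (fun x hx => ?_) hW
  simpa [LinearMap.mem_ker.1 hx] using hf x

theorem Finsupp.forall_sub_mem_of_single {α R : Type*} [Ring R]
    {f : (α →₀ R) →ₗ[R] (α →₀ R)} {W : Submodule R (α →₀ R)}
    (hf : ∀ a, f (single a 1) - single a 1 ∈ W) (x : α →₀ R) : f x - x ∈ W := by
  have : W.comap (f - LinearMap.id) = ⊤ := by
    rw [eq_top_iff, ← (Finsupp.basisSingleOne (R := R) (ι := α)).span_eq, Submodule.span_le]
    rintro _ ⟨a, rfl⟩
    simpa using hf a
  simpa using this.ge (Submodule.mem_top (x := x))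

theorem Finsupp.supported_le_ker_of_single {α R M : Type*} [Semiring R] [AddCommMonoid M]
    [Module R M] {f : (α →₀ R) →ₗ[R] M} {s : Set α} (hf : ∀ a ∈ s, f (single a 1) = 0) :
    supported R R s ≤ LinearMap.ker f := by
  rw [supported_eq_span_single, Submodule.span_le]
  rintro _ ⟨a, ha, rfl⟩
  exact hf a ha

theorem Finsupp.span_setOf_single_eq_supported {α R : Type*} [Semiring R] (P : α → Prop) :
    Submodule.span R {f : α →₀ R | ∃ a, P a ∧ f = single a 1} = supported R R {a | P a} := by
  rw [supported_eq_span_single]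
  congr 1
  ext f
  simp [eq_comm]

section Partitions

variable {n : ℕ}

theorem mem_blk {p : Setoid (Fin n)} {x y : Fin n} : y ∈ blk p x ↔ p.r x y := by
  classical simp [blk]

theorem blk_card_ne_zero (p : Setoid (Fin n)) (x : Fin n) : (blk p x).card ≠ 0 :=
  Finset.card_ne_zero_of_mem (mem_blk.2 (p.refl' x))

theorem blk_eq_singleton {p : Setoid (Fin n)} {x : Fin n} (hx : ∀ y, p.r x y → y = x) :
    blk p x = {x} := by
  ext y
  rw [mem_blk, Finset.mem_singleton]
  exact ⟨hx y, fun h => h ▸ p.refl' x⟩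

theorem mem_reps_of_forall_eq {p : Setoid (Fin n)} {x : Fin n} (hx : ∀ y, p.r x y → y = x) :
    x ∈ reps p := by
  classical
  simp only [reps, Finset.mem_filter, Finset.mem_univ, true_and]
  exact fun y hy => (hx y hy).ge

theorem notMem_blk_of_forall_eq {p : Setoid (Fin n)} {x y : Fin n}
    (hx : ∀ z, p.r x z → z = x) (hyx : y ≠ x) : x ∉ blk p y :=
  fun h => hyx (hx y (p.symm' (mem_blk.1 h)))

@[simp]
theorem disconnect_empty (p : Setoid (Fin n)) : disconnect p ∅ = p := by
  ext x y
  exact ⟨by rintro (rfl | ⟨-, -, h⟩) <;> first | exact p.refl' x | exact h,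
    fun h => Or.inr ⟨Finset.notMem_empty x, Finset.notMem_empty y, h⟩⟩

theorem hasSingleton_disconnect (p : Setoid (Fin n)) {S : Finset (Fin n)} (hS : S.Nonempty) :
    hasSingleton (disconnect p S) := by
  obtain ⟨x, hx⟩ := hS
  refine ⟨x, fun y hy => ?_⟩
  rcases hy with h | ⟨hx', -, -⟩
  · exact h.symm
  · exact absurd hx hx'

theorem disconnect_insert_of_forall_eq {p : Setoid (Fin n)} {x : Fin n}
    (hx : ∀ y, p.r x y → y = x) (S : Finset (Fin n)) :
    disconnect p (insert x S) = disconnect p S := by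
  ext a b
  constructor
  · rintro (rfl | ⟨ha, hb, hr⟩)
    · exact Or.inl rfl
    · exact Or.inr ⟨fun h => ha (Finset.mem_insert_of_mem h),
        fun h => hb (Finset.mem_insert_of_mem h), hr⟩
  · rintro (rfl | ⟨ha, hb, hr⟩)
    · exact Or.inl rfl
    · by_cases hax : a = x
      · exact Or.inl (hax.trans (hx b (hax ▸ hr)).symm)
      by_cases hbx : b = x
      · exact Or.inl ((hx a (p.symm' (hbx ▸ hr))).trans hbx.symm)
      exact Or.inr ⟨by simp [hax, ha], by simp [hbx, hb], hr⟩

end Partitions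

section Coefficients

variable {N : ℕ} {ε : ℝ} {n : ℕ}

theorem vWeight_zero {k : ℕ} (hk : k ≠ 0) : vWeight N ε k 0 = 1 := by
  simp [vWeight, hk.symm]

theorem vWeight_one_one (hN : N ≠ 1) : vWeight N ε 1 1 = -1 := by
  have hN' : (N : ℝ) - 1 ≠ 0 := sub_ne_zero.2 (by exact_mod_cast hN)
  have : ((N : ℝ) - 1) * (-(1 / ((N : ℝ) - 1)) * (1 + ε / Real.sqrt N)) ^ 1
      + (ε / Real.sqrt N) ^ 1 = -1 := by
    field_simp
    ring
  simp only [vWeight, this]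
  norm_num

theorem vCoeff_empty (p : Setoid (Fin n)) : vCoeff N ε p ∅ = 1 :=
  Finset.prod_eq_one fun x _ => by simp [vWeight_zero (blk_card_ne_zero p x)]

theorem vCoeff_insert_of_forall_eq (hN : N ≠ 1) {p : Setoid (Fin n)} {x : Fin n}
    (hx : ∀ y, p.r x y → y = x) {S : Finset (Fin n)} (hxS : x ∉ S) :
    vCoeff N ε p (insert x S) = -vCoeff N ε p S := by
  have hxr := mem_reps_of_forall_eq hx
  have hrest : ∀ y ∈ (reps p).erase x, blk p y ∩ insert x S = blk p y ∩ S := fun y hy => by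
    rw [Finset.inter_insert_of_notMem (notMem_blk_of_forall_eq hx (Finset.ne_of_mem_erase hy))]
  unfold vCoeff
  rw [← Finset.mul_prod_erase _ _ hxr, ← Finset.mul_prod_erase _ _ hxr,
    Finset.prod_congr rfl fun y hy => by rw [hrest y hy], blk_eq_singleton hx,
    Finset.singleton_inter_of_mem (Finset.mem_insert_self x S),
    Finset.singleton_inter_of_notMem hxS]
  simp [vWeight_one_one hN, vWeight_zero one_ne_zero]

end Coefficients

section Vmap

variable {N : ℕ} {ε : ℝ} {n : ℕ}

theorem Vmap_single (p : Setoid (Fin n)) :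
    Vmap N ε n (single p 1) =
      ∑ S ∈ Finset.univ.powerset, vCoeff N ε p S • single (disconnect p S) (1 : ℂ) := by
  simp [Vmap]

theorem Vmap_single_sub_mem_supported (p : Setoid (Fin n)) :
    Vmap N ε n (single p 1) - single p 1 ∈ supported ℂ ℂ {r | hasSingleton r} := by
  rw [Vmap_single, ← Finset.add_sum_erase _ _ (Finset.empty_mem_powerset _), vCoeff_empty,
    disconnect_empty, one_smul, add_sub_cancel_left]
  refine Submodule.sum_mem _ fun S hS => Submodule.smul_mem _ _ (single_mem_supported ℂ _ ?_)
  exact hasSingleton_disconnect p (Finset.nonempty_iff_ne_empty.2 (Finset.ne_of_mem_erase hS))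

theorem Vmap_single_of_hasSingleton (hN : N ≠ 1) {p : Setoid (Fin n)} (hp : hasSingleton p) :
    Vmap N ε n (single p 1) = 0 := by
  classical
  obtain ⟨x, hx⟩ := hp
  have hxe : x ∉ Finset.univ.erase x := Finset.notMem_erase x _
  rw [Vmap_single, ← Finset.insert_erase (Finset.mem_univ x), Finset.sum_powerset_insert hxe,
    ← Finset.sum_add_distrib]
  refine Finset.sum_eq_zero fun S hS => ?_
  have hxS : x ∉ S := fun h => hxe (Finset.mem_powerset.1 hS h)
  rw [disconnect_insert_of_forall_eq hx, vCoeff_insert_of_forall_eq hN hx hxS, neg_smul,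
    add_neg_cancel]

end Vmap

theorem stmt19_general (N n : ℕ) (hN : 2 ≤ N) (ε : ℝ) :
    (∀ p : Setoid (Fin n), ∃ q : Setoid (Fin n) →₀ ℂ,
      (∀ r ∈ q.support, hasSingleton r) ∧
      Vmap N ε n (Finsupp.single p 1) = Finsupp.single p 1 + q) ∧
    LinearMap.ker (Vmap N ε n) =
      Submodule.span ℂ {f : Setoid (Fin n) →₀ ℂ |
        ∃ p : Setoid (Fin n), hasSingleton p ∧ f = Finsupp.single p 1} := by
  have hN1 : N ≠ 1 := by omega
  rw [span_setOf_single_eq_supported]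
  refine ⟨fun p => ⟨_, (mem_supported ℂ _).1 (Vmap_single_sub_mem_supported p),
    (add_sub_cancel _ _).symm⟩, ?_⟩
  exact LinearMap.ker_eq_of_le_of_forall_sub_mem
    (supported_le_ker_of_single fun p hp => Vmap_single_of_hasSingleton hN1 hp)
    (forall_sub_mem_of_single Vmap_single_sub_mem_supported)

/-- (1) For every partition `p`, `𝒱_{(N,±)} p = p + q` where `q`
is a linear combination of partitions each containing a singleton;
(2) consequently the kernel of `𝒱_{(N,±)}` equals the span of the partitions
containing a singleton. -/
theorem stmt19 (N n : ℕ) (hN : 2 ≤ N) (ε : ℝ) (hε : ε = 1 ∨ ε = -1) :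
    (∀ p : Setoid (Fin n), ∃ q : Setoid (Fin n) →₀ ℂ,
      (∀ r ∈ q.support, hasSingleton r) ∧
      Vmap N ε n (Finsupp.single p 1) = Finsupp.single p 1 + q) ∧
    LinearMap.ker (Vmap N ε n) =
      Submodule.span ℂ {f : Setoid (Fin n) →₀ ℂ |
        ∃ p : Setoid (Fin n), hasSingleton p ∧ f = Finsupp.single p 1} :=
  stmt19_general N n hN ε
end
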